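/- arXiv:2310.16170 — 9 statements merged into one kernel-verified Lean document; each statement's English description precedes it below -/
import Mathlib

section
/- Suppose (u_{i-1} + c·u_i + u_{i+1})/(c+2) ≤ M with c ≥ 2 and u_i > M. Then (M - u_{i-1})_+ + (M - u_{i+1})_+ > 0 and (u_i - M)_+ / ((M - u_{i-1})_+ + (M - u_{i+1})_+) ≤ 1/c, where (a)_+ = max{a, 0}. -/
lemma mul_sub_le_max_sub_add_max_sub {c M u1 u2 u3 : ℝ} (hc : 0 < c)
    (h : (u1 + c * u2 + u3) / (c + 2) ≤ M) :
    c * (u2 - M) ≤ max (M - u1) 0 + max (M - u3) 0 := by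
  rw [div_le_iff₀ (by linarith)] at h
  linarith [le_max_left (M - u1) 0, le_max_left (M - u3) 0]

theorem stmt_2 (c M u1 u2 u3 : ℝ) (hc : 2 ≤ c)
    (h : (u1 + c * u2 + u3) / (c + 2) ≤ M) (hu2 : M < u2) :
    0 < max (M - u1) 0 + max (M - u3) 0 ∧
    max (u2 - M) 0 / (max (M - u1) 0 + max (M - u3) 0) ≤ 1 / c := by
  have hc0 : 0 < c := by linarith
  have hexcess : 0 < u2 - M := sub_pos.2 hu2
  have hkey := mul_sub_le_max_sub_add_max_sub hc0 h
  have hsum : 0 < max (M - u1) 0 + max (M - u3) 0 := (mul_pos hc0 hexcess).trans_le hkey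
  refine ⟨hsum, ?_⟩
  rw [max_eq_left hexcess.le, div_le_div_iff₀ hsum hc0, one_mul, mul_comm]
  exact hkey
end

section
/- Let f : ℝ → ℝ be differentiable with |f'(u)| ≤ L for all u ∈ [m, M], and let λ > 0 satisfy λ·L ≤ 1/3. Define H(a, b, c) = (1/6)(a + 4b + c) - (λ/2)(f(c) - f(a)). Then H is monotonically nondecreasing in each of its three arguments on [m, M]³, and consequently, if a, b, c ∈ [m, M] then m ≤ H(a, b, c) ≤ M, provided f is defined on [m, M]. -/
/-!
Writing `H a b c = ((a + 3λ f a) + 4 b + (c - 3λ f c)) / 6`, monotonicity in `a` and `c` amounts to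
`x ↦ x ∓ 3λ f x` being nondecreasing, which holds because `f` is `L`-Lipschitz on `[m, M]` by the
mean value theorem and `3λ L ≤ 1`. Since `H m m m = m` and `H M M M = M`, monotonicity in each
argument traps `H a b c` in `[m, M]`.
-/

open Set

theorem monotoneOn_sub_mul_of_abs_sub_le {g : ℝ → ℝ} {s : Set ℝ} {K κ : ℝ}
    (hg : ∀ x ∈ s, ∀ y ∈ s, |g y - g x| ≤ K * |y - x|) (hκ : |κ| * K ≤ 1) :
    MonotoneOn (fun x => x - κ * g x) s := by
  intro x hx y hy hxy
  have hyx : 0 ≤ y - x := sub_nonneg.mpr hxy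
  have : κ * (g y - g x) ≤ y - x :=
    calc κ * (g y - g x) ≤ |κ| * |g y - g x| := by rw [← abs_mul]; exact le_abs_self _
      _ ≤ |κ| * (K * (y - x)) := by
          gcongr
          simpa only [abs_of_nonneg hyx] using hg x hx y hy
      _ = (|κ| * K) * (y - x) := by ring
      _ ≤ y - x := mul_le_of_le_one_left hyx hκ
  show x - κ * g x ≤ y - κ * g y
  linarith

theorem stmt_4_general (m M L lam : ℝ) (f f' : ℝ → ℝ)
    (hf : ∀ u ∈ Set.Icc m M, HasDerivAt f (f' u) u)
    (hL : ∀ u ∈ Set.Icc m M, |f' u| ≤ L)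
    (hlam : 0 < lam) (hcfl : lam * L ≤ 1 / 3) :
    let H : ℝ → ℝ → ℝ → ℝ := fun a b c =>
      (1 / 6) * (a + 4 * b + c) - (lam / 2) * (f c - f a)
    (∀ a ∈ Set.Icc m M, ∀ a' ∈ Set.Icc m M, ∀ b ∈ Set.Icc m M, ∀ c ∈ Set.Icc m M,
        a ≤ a' → H a b c ≤ H a' b c) ∧
    (∀ a ∈ Set.Icc m M, ∀ b ∈ Set.Icc m M, ∀ b' ∈ Set.Icc m M, ∀ c ∈ Set.Icc m M,
        b ≤ b' → H a b c ≤ H a b' c) ∧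
    (∀ a ∈ Set.Icc m M, ∀ b ∈ Set.Icc m M, ∀ c ∈ Set.Icc m M, ∀ c' ∈ Set.Icc m M,
        c ≤ c' → H a b c ≤ H a b c') ∧
    (∀ a ∈ Set.Icc m M, ∀ b ∈ Set.Icc m M, ∀ c ∈ Set.Icc m M,
        H a b c ∈ Set.Icc m M) := by
  intro H
  have hlip : ∀ x ∈ Icc m M, ∀ y ∈ Icc m M, |f y - f x| ≤ L * |y - x| := fun x hx y hy =>
    (convex_Icc m M).norm_image_sub_le_of_norm_hasDerivWithin_le
      (fun u hu => (hf u hu).hasDerivWithinAt) hL hx hy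
  have h3lam : |3 * lam| = 3 * lam := abs_of_pos (by positivity)
  have hφ := monotoneOn_sub_mul_of_abs_sub_le (κ := -(3 * lam)) hlip
    (by rw [abs_neg, h3lam]; linarith)
  have hψ := monotoneOn_sub_mul_of_abs_sub_le (κ := 3 * lam) hlip (by rw [h3lam]; linarith)
  have monoA : ∀ a ∈ Icc m M, ∀ a' ∈ Icc m M, ∀ b ∈ Icc m M, ∀ c ∈ Icc m M,
      a ≤ a' → H a b c ≤ H a' b c := fun a ha a' ha' b _ c _ h => by
    have := hφ ha ha' h
    simp only [H] at this ⊢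
    linarith
  have monoB : ∀ a ∈ Icc m M, ∀ b ∈ Icc m M, ∀ b' ∈ Icc m M, ∀ c ∈ Icc m M,
      b ≤ b' → H a b c ≤ H a b' c := fun a _ b _ b' _ c _ h => by
    simp only [H]
    linarith
  have monoC : ∀ a ∈ Icc m M, ∀ b ∈ Icc m M, ∀ c ∈ Icc m M, ∀ c' ∈ Icc m M,
      c ≤ c' → H a b c ≤ H a b c' := fun a _ b _ c hc c' hc' h => by
    have := hψ hc hc' h
    simp only [H] at this ⊢
    linarith
  refine ⟨monoA, monoB, monoC, fun a ha b hb c hc => ?_⟩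
  have hm : m ∈ Icc m M := left_mem_Icc.mpr (ha.1.trans ha.2)
  have hM : M ∈ Icc m M := right_mem_Icc.mpr (ha.1.trans ha.2)
  constructor
  · calc m = H m m m := by simp only [H]; ring
      _ ≤ H a m m := monoA m hm a ha m hm m hm ha.1
      _ ≤ H a b m := monoB a ha m hm b hb m hm hb.1
      _ ≤ H a b c := monoC a ha b hb m hm c hc hc.1
  · calc H a b c ≤ H M b c := monoA a ha M hM b hb c hc ha.2
      _ ≤ H M M c := monoB M hM b hb M hM c hc hb.2
      _ ≤ H M M M := monoC M hM M hM c hc M hM hc.2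
      _ = M := by simp only [H]; ring

theorem stmt_4 (m M L lam : ℝ) (hmM : m ≤ M) (f f' : ℝ → ℝ)
    (hf : ∀ u ∈ Set.Icc m M, HasDerivAt f (f' u) u)
    (hL : ∀ u ∈ Set.Icc m M, |f' u| ≤ L)
    (hlam : 0 < lam) (hcfl : lam * L ≤ 1 / 3) :
    let H : ℝ → ℝ → ℝ → ℝ := fun a b c =>
      (1 / 6) * (a + 4 * b + c) - (lam / 2) * (f c - f a)
    (∀ a ∈ Set.Icc m M, ∀ a' ∈ Set.Icc m M, ∀ b ∈ Set.Icc m M, ∀ c ∈ Set.Icc m M,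
        a ≤ a' → H a b c ≤ H a' b c) ∧
    (∀ a ∈ Set.Icc m M, ∀ b ∈ Set.Icc m M, ∀ b' ∈ Set.Icc m M, ∀ c ∈ Set.Icc m M,
        b ≤ b' → H a b c ≤ H a b' c) ∧
    (∀ a ∈ Set.Icc m M, ∀ b ∈ Set.Icc m M, ∀ c ∈ Set.Icc m M, ∀ c' ∈ Set.Icc m M,
        c ≤ c' → H a b c ≤ H a b c') ∧
    (∀ a ∈ Set.Icc m M, ∀ b ∈ Set.Icc m M, ∀ c ∈ Set.Icc m M,
        H a b c ∈ Set.Icc m M) :=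
  stmt_4_general m M L lam f f' hf hL hlam hcfl
end

section
/- Let N ≥ 3 and let u : ℤ/N → ℝ satisfy u_i ∈ [m, M] for all i. Let f : ℝ → ℝ be differentiable on [m, M] with |f'| ≤ L there, and let λ > 0 with λ·L ≤ 1/3. Then for every i (indices mod N), the quantity (1/6)(u_{i-1} + 4u_i + u_{i+1}) - (λ/2)(f(u_{i+1}) - f(u_{i-1})) lies in [m, M]. -/
theorem stmt_5 (N : ℕ) [NeZero N] (hN : 3 ≤ N) (m M L lam : ℝ)
    (u : ZMod N → ℝ) (hu : ∀ i, u i ∈ Set.Icc m M) (f f' : ℝ → ℝ)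
    (hf : ∀ x ∈ Set.Icc m M, HasDerivAt f (f' x) x)
    (hL : ∀ x ∈ Set.Icc m M, |f' x| ≤ L)
    (hlam : 0 < lam) (hcfl : lam * L ≤ 1 / 3) :
    ∀ i : ZMod N,
      (1 / 6) * (u (i - 1) + 4 * u i + u (i + 1))
        - (lam / 2) * (f (u (i + 1)) - f (u (i - 1))) ∈ Set.Icc m M := by
  intro i
  have hLip : ∀ a ∈ Set.Icc m M, ∀ b ∈ Set.Icc m M, |f b - f a| ≤ L * |b - a| := by
    intro a ha b hb
    have := Convex.norm_image_sub_le_of_norm_hasDerivWithin_le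
      (f' := f') (fun x hx => (hf x hx).hasDerivWithinAt)
      (fun x hx => by simpa using hL x hx) (convex_Icc m M) ha hb
    simpa [Real.norm_eq_abs] using this
  obtain ⟨ha1, ha2⟩ := hu (i - 1)
  obtain ⟨hb1, hb2⟩ := hu (i + 1)
  obtain ⟨hx1, hx2⟩ := hu i
  set a := u (i - 1)
  set b := u (i + 1)
  have hD := hLip a (hu _) b (hu _)
  have hL0 : 0 ≤ L := le_trans (abs_nonneg _) (hL a (hu _))
  have habs : |b - a| ≤ (b - m) + (a - m) := by
    rcases abs_cases (b - a) with ⟨h, _⟩ | ⟨h, _⟩ <;> rw [h] <;> linarith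
  have habs' : |b - a| ≤ (M - b) + (M - a) := by
    rcases abs_cases (b - a) with ⟨h, _⟩ | ⟨h, _⟩ <;> rw [h] <;> linarith
  have hDl : f b - f a ≤ L * ((b - m) + (a - m)) := by
    have := le_abs_self (f b - f a)
    nlinarith [mul_le_mul_of_nonneg_left habs hL0]
  have hDu : -(f b - f a) ≤ L * ((M - b) + (M - a)) := by
    have := neg_abs_le (f b - f a)
    nlinarith [mul_le_mul_of_nonneg_left habs' hL0]
  have key1 : lam * (f b - f a) ≤ (1/3) * ((b - m) + (a - m)) := by
    calc lam * (f b - f a) ≤ lam * (L * ((b - m) + (a - m))) :=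
          mul_le_mul_of_nonneg_left hDl hlam.le
      _ = (lam * L) * ((b - m) + (a - m)) := by ring
      _ ≤ (1/3) * ((b - m) + (a - m)) :=
          mul_le_mul_of_nonneg_right hcfl (by linarith)
  have key2 : lam * (-(f b - f a)) ≤ (1/3) * ((M - b) + (M - a)) := by
    calc lam * (-(f b - f a)) ≤ lam * (L * ((M - b) + (M - a))) :=
          mul_le_mul_of_nonneg_left hDu hlam.le
      _ = (lam * L) * ((M - b) + (M - a)) := by ring
      _ ≤ (1/3) * ((M - b) + (M - a)) :=
          mul_le_mul_of_nonneg_right hcfl (by linarith)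
  constructor
  · linarith
  · linarith
end

section
/- Let m ≤ M and let v_{m_j}, v_{n_j} ∈ [m, M], and let N_0, N_1 be nonnegative integers with N_1 ≥ 1. Set A = v_{m_j} + v_{n_j} + N_1·M - (N_1 + 2)·m and suppose A > 0. Let U satisfy (N_0 + N_1 + 2)·m ≤ U and set V = N_1·M + N_0·m + v_{m_j} + v_{n_j}, with V > U. Then for any v ∈ [m, M], the rescaled value v - ((v - m)/A)·(V - U) lies in [m, M]. -/
open Set

theorem sub_mul_sub_mem_Icc {𝕜 : Type*} [Field 𝕜] [LinearOrder 𝕜] [IsStrictOrderedRing 𝕜]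
    {a b v t : 𝕜} (hv : v ∈ Icc a b) (ht : t ∈ Icc 0 1) : v - t * (v - a) ∈ Icc a b := by
  have hcombo : (1 - t) • v + t • a ∈ Icc a b :=
    convex_Icc a b hv (left_mem_Icc.2 (hv.1.trans hv.2)) (sub_nonneg.2 ht.2) ht.1 (by ring)
  convert hcombo using 1
  simp only [smul_eq_mul]
  ring

theorem stmt_7_general (m M vm vn U : ℝ) (N0 N1 : ℕ)
    (hA : 0 < vm + vn + (N1 : ℝ) * M - ((N1 : ℝ) + 2) * m)
    (hU : ((N0 : ℝ) + (N1 : ℝ) + 2) * m ≤ U)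
    (hVU : U < (N1 : ℝ) * M + (N0 : ℝ) * m + vm + vn) :
    ∀ v ∈ Set.Icc m M,
      v - ((v - m) / (vm + vn + (N1 : ℝ) * M - ((N1 : ℝ) + 2) * m))
          * (((N1 : ℝ) * M + (N0 : ℝ) * m + vm + vn) - U) ∈ Set.Icc m M := by
  intro v hv
  rw [div_mul_comm]
  refine sub_mul_sub_mem_Icc hv ⟨div_nonneg (by linarith) hA.le, (div_le_one hA).2 ?_⟩
  -- V - A = (N0 + N1 + 2) m ≤ U
  linarith

theorem stmt_7 (m M vm vn U : ℝ) (N0 N1 : ℕ) (hmM : m ≤ M)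
    (hvm : vm ∈ Set.Icc m M) (hvn : vn ∈ Set.Icc m M) (hN1 : 1 ≤ N1)
    (hA : 0 < vm + vn + (N1 : ℝ) * M - ((N1 : ℝ) + 2) * m)
    (hU : ((N0 : ℝ) + (N1 : ℝ) + 2) * m ≤ U)
    (hVU : U < (N1 : ℝ) * M + (N0 : ℝ) * m + vm + vn) :
    ∀ v ∈ Set.Icc m M,
      v - ((v - m) / (vm + vn + (N1 : ℝ) * M - ((N1 : ℝ) + 2) * m))
          * (((N1 : ℝ) * M + (N0 : ℝ) * m + vm + vn) - U) ∈ Set.Icc m M :=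
  stmt_7_general m M vm vn U N0 N1 hA hU hVU
end

section
/- Let g : ℝ → ℝ be differentiable on [m, M] with 0 ≤ g'(u) ≤ D there, and let μ > 0 satisfy μ·D ≤ 5/24. Then the function G(a, b, c) = ((a + 10b + c)/12) + 2μ·(g(a) - 2g(b) + g(c)) is monotonically nondecreasing in each argument on [m, M]³, and maps [m, M]³ into [m, M]. -/
/-!
Split `G(a, b, c) = φ a + ψ b + φ c` with `φ u = u / 12 + 2μ g u` and `ψ u = 5u / 6 - 4μ g u`.
Since `φ' = 1/12 + 2μ g' ≥ 0` and `ψ' = 5/6 - 4μ g' ≥ 5/6 - 4μD ≥ 0`, both are nondecreasing on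
`[m, M]`, which gives monotonicity of `G` in each argument. As `G t t t = t`, monotonicity then
squeezes `G a b c` between `G m m m = m` and `G M M M = M`.
-/

open Set

theorem monotoneOn_of_hasDerivAt_nonneg {s : Set ℝ} (hs : Convex ℝ s) {f f' : ℝ → ℝ}
    (hf : ∀ x ∈ s, HasDerivAt f (f' x) x) (hf' : ∀ x ∈ s, 0 ≤ f' x) : MonotoneOn f s :=
  monotoneOn_of_hasDerivWithinAt_nonneg hs
    (fun x hx => (hf x hx).continuousAt.continuousWithinAt)
    (fun x hx => (hf x (interior_subset hx)).hasDerivWithinAt)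
    (fun x hx => hf' x (interior_subset hx))

section CompactScheme

variable {s : Set ℝ} {D mu : ℝ} {g g' : ℝ → ℝ}

theorem monotoneOn_outer_weight (hs : Convex ℝ s) (hg : ∀ u ∈ s, HasDerivAt g (g' u) u)
    (hg' : ∀ u ∈ s, 0 ≤ g' u) (hmu : 0 ≤ mu) :
    MonotoneOn (fun u => u / 12 + 2 * mu * g u) s :=
  monotoneOn_of_hasDerivAt_nonneg hs
    (fun u hu => ((hasDerivAt_id u).div_const 12).add ((hg u hu).const_mul (2 * mu)))
    (fun u hu => by have := hg' u hu; positivity)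

theorem monotoneOn_center_weight (hs : Convex ℝ s) (hg : ∀ u ∈ s, HasDerivAt g (g' u) u)
    (hg' : ∀ u ∈ s, g' u ≤ D) (hmu : 0 ≤ mu) (hcfl : mu * D ≤ 5 / 24) :
    MonotoneOn (fun u => 5 * u / 6 - 4 * mu * g u) s := by
  refine monotoneOn_of_hasDerivAt_nonneg hs
    (fun u hu => (((hasDerivAt_id u).const_mul 5).div_const 6).sub ((hg u hu).const_mul (4 * mu)))
    (fun u hu => ?_)
  have : mu * g' u ≤ mu * D := mul_le_mul_of_nonneg_left (hg' u hu) hmu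
  linarith

end CompactScheme

theorem stmt_8_general (m M D mu : ℝ) (g g' : ℝ → ℝ)
    (hg : ∀ u ∈ Set.Icc m M, HasDerivAt g (g' u) u)
    (hg' : ∀ u ∈ Set.Icc m M, 0 ≤ g' u ∧ g' u ≤ D)
    (hmu : 0 < mu) (hcfl : mu * D ≤ 5 / 24) :
    let G : ℝ → ℝ → ℝ → ℝ := fun a b c =>
      (a + 10 * b + c) / 12 + 2 * mu * (g a - 2 * g b + g c)
    (∀ a ∈ Set.Icc m M, ∀ a' ∈ Set.Icc m M, ∀ b ∈ Set.Icc m M, ∀ c ∈ Set.Icc m M,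
        a ≤ a' → G a b c ≤ G a' b c) ∧
    (∀ a ∈ Set.Icc m M, ∀ b ∈ Set.Icc m M, ∀ b' ∈ Set.Icc m M, ∀ c ∈ Set.Icc m M,
        b ≤ b' → G a b c ≤ G a b' c) ∧
    (∀ a ∈ Set.Icc m M, ∀ b ∈ Set.Icc m M, ∀ c ∈ Set.Icc m M, ∀ c' ∈ Set.Icc m M,
        c ≤ c' → G a b c ≤ G a b c') ∧
    (∀ a ∈ Set.Icc m M, ∀ b ∈ Set.Icc m M, ∀ c ∈ Set.Icc m M,
        G a b c ∈ Set.Icc m M) := by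
  intro G
  have hφ := monotoneOn_outer_weight (convex_Icc m M) hg (fun u hu => (hg' u hu).1) hmu.le
  have hψ := monotoneOn_center_weight (convex_Icc m M) hg (fun u hu => (hg' u hu).2) hmu.le hcfl
  have hG : ∀ a b c, G a b c =
      (a / 12 + 2 * mu * g a) + (5 * b / 6 - 4 * mu * g b) + (c / 12 + 2 * mu * g c) :=
    fun a b c => by simp only [G]; ring
  refine ⟨fun a ha a' ha' b _ c _ h => ?_, fun a _ b hb b' hb' c _ h => ?_,
    fun a _ b _ c hc c' hc' h => ?_, fun a ha b hb c hc => ?_⟩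
  · simp only [hG]; linarith [hφ ha ha' h]
  · simp only [hG]; linarith [hψ hb hb' h]
  · simp only [hG]; linarith [hφ hc hc' h]
  have hm : m ∈ Icc m M := left_mem_Icc.2 (ha.1.trans ha.2)
  have hM : M ∈ Icc m M := right_mem_Icc.2 (ha.1.trans ha.2)
  constructor
  · linarith [hG a b c, hφ hm ha ha.1, hψ hm hb hb.1, hφ hm hc hc.1]
  · linarith [hG a b c, hφ ha hM ha.2, hψ hb hM hb.2, hφ hc hM hc.2]

theorem stmt_8 (m M D mu : ℝ) (hmM : m ≤ M) (g g' : ℝ → ℝ)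
    (hg : ∀ u ∈ Set.Icc m M, HasDerivAt g (g' u) u)
    (hg' : ∀ u ∈ Set.Icc m M, 0 ≤ g' u ∧ g' u ≤ D)
    (hmu : 0 < mu) (hcfl : mu * D ≤ 5 / 24) :
    let G : ℝ → ℝ → ℝ → ℝ := fun a b c =>
      (a + 10 * b + c) / 12 + 2 * mu * (g a - 2 * g b + g c)
    (∀ a ∈ Set.Icc m M, ∀ a' ∈ Set.Icc m M, ∀ b ∈ Set.Icc m M, ∀ c ∈ Set.Icc m M,
        a ≤ a' → G a b c ≤ G a' b c) ∧
    (∀ a ∈ Set.Icc m M, ∀ b ∈ Set.Icc m M, ∀ b' ∈ Set.Icc m M, ∀ c ∈ Set.Icc m M,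
        b ≤ b' → G a b c ≤ G a b' c) ∧
    (∀ a ∈ Set.Icc m M, ∀ b ∈ Set.Icc m M, ∀ c ∈ Set.Icc m M, ∀ c' ∈ Set.Icc m M,
        c ≤ c' → G a b c ≤ G a b c') ∧
    (∀ a ∈ Set.Icc m M, ∀ b ∈ Set.Icc m M, ∀ c ∈ Set.Icc m M,
        G a b c ∈ Set.Icc m M) :=
  stmt_8_general m M D mu g g' hg hg' hmu hcfl
end

section
/- Let α₁ > 1/3 and set β₁ = (3α₁ - 1)/12. Define c⁽¹⁾ = 6α₁/(3α₁-1) - √2·√(7 - 24α₁ + 27α₁²)/√(1 - 6α₁ + 9α₁²) and c⁽²⁾ = 6α₁/(3α₁-1) + √2·√(7 - 24α₁ + 27α₁²)/√(1 - 6α₁ + 9α₁²) (assuming α₁ ≠ 1/3 so the denominator is nonzero). Then the N×N circulant five-diagonal matrix W̃₁ with symbol (β₁z⁻² + α₁z⁻¹ + 1 + α₁z + β₁z²)/(1 + 2α₁ + 2β₁) factors as the product of the circulant tridiagonal matrices (1/(c⁽¹⁾+2))·circ(c⁽¹⁾,1,0,…,0,1) and (1/(c⁽²⁾+2))·circ(c⁽²⁾,1,0,…,0,1).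 Equivalently, for all real z with |z|=1 (as a symbol identity): (β₁z⁻² + α₁z⁻¹ + 1 + α₁z + β₁z²)/(1 + 2α₁ + 2β₁) = ((z⁻¹ + c⁽¹⁾ + z)/(c⁽¹⁾+2))·((z⁻¹ + c⁽²⁾ + z)/(c⁽²⁾+2)). -/
/-!
Writing `w = z⁻¹ + z`, the symbol is `b w² + a w + (1 - 2b)` and each tridiagonal factor is
`w + cᵢ`, so the factorization amounts to Vieta's formulas `b (c₁ + c₂) = a` and
`b c₁ c₂ = 1 - 2b` for the two closed forms; the normalizations then agree because both sides
take the value `1` at `z = 1`.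
-/

section Factorization

variable {K : Type*} [Field K] {a b c₁ c₂ : K}

theorem symbol_eq_mul (hsum : b * (c₁ + c₂) = a) (hprod : b * (c₁ * c₂) = 1 - 2 * b)
    {z : K} (hz : z ≠ 0) :
    b * z⁻¹ ^ 2 + a * z⁻¹ + 1 + a * z + b * z ^ 2
      = b * ((z⁻¹ + c₁ + z) * (z⁻¹ + c₂ + z)) := by
  linear_combination (-2 * b) * inv_mul_cancel₀ hz - (z⁻¹ + z) * hsum - hprod

theorem symbol_div_eq_mul (hb : b ≠ 0) (hsum : b * (c₁ + c₂) = a)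
    (hprod : b * (c₁ * c₂) = 1 - 2 * b) {z : K} (hz : z ≠ 0) :
    (b * z⁻¹ ^ 2 + a * z⁻¹ + 1 + a * z + b * z ^ 2) / (1 + 2 * a + 2 * b)
      = ((z⁻¹ + c₁ + z) / (c₁ + 2)) * ((z⁻¹ + c₂ + z) / (c₂ + 2)) := by
  have hnorm : 1 + 2 * a + 2 * b = b * ((c₁ + 2) * (c₂ + 2)) := by
    have h := symbol_eq_mul hsum hprod (one_ne_zero (α := K))
    simp only [inv_one, one_pow, mul_one] at h
    linear_combination h
  rw [symbol_eq_mul hsum hprod hz, hnorm, mul_div_mul_left _ _ hb, div_mul_div_comm]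

theorem sum_and_prod_of_closedForm [CharZero K] {t : K} (hd : 3 * a - 1 ≠ 0)
    (ht : t ^ 2 = 2 * (7 - 24 * a + 27 * a ^ 2)) (hb : b = (3 * a - 1) / 12)
    (hc₁ : c₁ = 6 * a / (3 * a - 1) - t / (3 * a - 1))
    (hc₂ : c₂ = 6 * a / (3 * a - 1) + t / (3 * a - 1)) :
    b * (c₁ + c₂) = a ∧ b * (c₁ * c₂) = 1 - 2 * b := by
  subst hb hc₁ hc₂
  constructor
  · field_simp
    ring
  · field_simp
    linear_combination -ht

end Factorization

theorem stmt_11 (a1 b1 c1 c2 : ℝ) (ha : 1 / 3 < a1)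
    (hb : b1 = (3 * a1 - 1) / 12)
    (hc1 : c1 = 6 * a1 / (3 * a1 - 1)
      - Real.sqrt 2 * Real.sqrt (7 - 24 * a1 + 27 * a1 ^ 2)
          / Real.sqrt (1 - 6 * a1 + 9 * a1 ^ 2))
    (hc2 : c2 = 6 * a1 / (3 * a1 - 1)
      + Real.sqrt 2 * Real.sqrt (7 - 24 * a1 + 27 * a1 ^ 2)
          / Real.sqrt (1 - 6 * a1 + 9 * a1 ^ 2)) :
    ∀ z : ℝ, z ≠ 0 →
      (b1 * z⁻¹ ^ 2 + a1 * z⁻¹ + 1 + a1 * z + b1 * z ^ 2) / (1 + 2 * a1 + 2 * b1)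
        = ((z⁻¹ + c1 + z) / (c1 + 2)) * ((z⁻¹ + c2 + z) / (c2 + 2)) := by
  intro z hz
  have hd : 0 < 3 * a1 - 1 := by linarith
  have hden : Real.sqrt (1 - 6 * a1 + 9 * a1 ^ 2) = 3 * a1 - 1 := by
    rw [show 1 - 6 * a1 + 9 * a1 ^ 2 = (3 * a1 - 1) ^ 2 by ring, Real.sqrt_sq hd.le]
  have hdisc : 0 ≤ 7 - 24 * a1 + 27 * a1 ^ 2 := by nlinarith [sq_nonneg (9 * a1 - 4)]
  have ht : (Real.sqrt 2 * Real.sqrt (7 - 24 * a1 + 27 * a1 ^ 2)) ^ 2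
      = 2 * (7 - 24 * a1 + 27 * a1 ^ 2) := by
    rw [mul_pow, Real.sq_sqrt zero_le_two, Real.sq_sqrt hdisc]
  rw [hden] at hc1 hc2
  obtain ⟨hsum, hprod⟩ := sum_and_prod_of_closedForm hd.ne' ht hb hc1 hc2
  exact symbol_div_eq_mul (by rw [hb]; positivity) hsum hprod hz
end

section
/- For 1/3 < α₁ ≤ 5/9 with β₁ = (3α₁-1)/12, both roots c⁽¹⁾ = 6α₁/(3α₁-1) - √2·√(7-24α₁+27α₁²)/(3α₁-1) and c⁽²⁾ = 6α₁/(3α₁-1) + √2·√(7-24α₁+27α₁²)/(3α₁-1) of the quadratic z² - (α₁/β₁)z + (1/β₁ - 2) = 0 (the symbol factorization condition) satisfy c⁽¹⁾ ≥ 2 and c⁽²⁾ ≥ 2. -/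
theorem stmt_12 (a1 b1 c1 c2 : ℝ) (ha : 1 / 3 < a1) (ha' : a1 ≤ 5 / 9)
    (hb : b1 = (3 * a1 - 1) / 12)
    (hc1 : c1 = 6 * a1 / (3 * a1 - 1)
      - Real.sqrt 2 * Real.sqrt (7 - 24 * a1 + 27 * a1 ^ 2) / (3 * a1 - 1))
    (hc2 : c2 = 6 * a1 / (3 * a1 - 1)
      + Real.sqrt 2 * Real.sqrt (7 - 24 * a1 + 27 * a1 ^ 2) / (3 * a1 - 1)) :
    2 ≤ c1 ∧ 2 ≤ c2 := by
  have hd : (0:ℝ) < 3 * a1 - 1 := by linarith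
  set s := Real.sqrt 2 * Real.sqrt (7 - 24 * a1 + 27 * a1 ^ 2) with hs
  have hs0 : 0 ≤ s := mul_nonneg (Real.sqrt_nonneg _) (Real.sqrt_nonneg _)
  have hs2 : s ≤ 2 := by
    have h1 : s = Real.sqrt (2 * (7 - 24 * a1 + 27 * a1 ^ 2)) := by
      rw [hs, ← Real.sqrt_mul (by norm_num)]
    rw [h1]
    have : 2 * (7 - 24 * a1 + 27 * a1 ^ 2) ≤ 4 := by nlinarith
    calc Real.sqrt (2 * (7 - 24 * a1 + 27 * a1 ^ 2)) ≤ Real.sqrt 4 :=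
          Real.sqrt_le_sqrt this
      _ = 2 := by
          rw [show (4:ℝ) = 2^2 by norm_num, Real.sqrt_sq (by norm_num)]
  constructor
  · rw [hc1, ← sub_div, le_div_iff₀ hd]
    linarith
  · rw [hc2, ← add_div, le_div_iff₀ hd]
    linarith
end

section
/- Let U = (u_{kl}) for k ∈ {i-1,i,i+1}, l ∈ {j-1,j,j+1} with all u_{kl} ∈ [m, M], let f, g be differentiable on [m, M] with |f'| ≤ L_f and |g'| ≤ L_g there, and let λ₁, λ₂ > 0 satisfy λ₁L_f + λ₂L_g ≤ 1/3. Then the quantity (1/36)(u_{i-1,j-1} + 4u_{i,j-1} + u_{i+1,j-1} + 4u_{i-1,j} + 16u_{i,j} + 4u_{i+1,j} + u_{i-1,j+1} + 4u_{i,j+1} + u_{i+1,j+1}) - (λ₁/12)(f(u_{i+1,j-1}) - f(u_{i-1,j-1}) + 4f(u_{i+1,j}) - 4f(u_{i-1,j}) + f(u_{i+1,j+1}) - f(u_{i-1,j+1})) - (λ₂/12)(g(u_{i-1,j+1}) - g(u_{i-1,j-1}) + 4g(u_{i,j+1}) - 4g(u_{i,j-1}) + g(u_{i+1,j+1}) -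 g(u_{i+1,j-1})) lies in [m, M]. -/
/-!
The update is a sum over the nine stencil cells of functions of one variable,
`x ↦ w x - a f x - b g x`, where `w` is the mass-matrix weight of the cell and `a`, `b` its
flux coefficients. The CFL condition gives `|a| L_f + |b| L_g ≤ w` for every cell, so each of
these functions has nonnegative derivative and is nondecreasing on `[m, M]`. Since the mass
weights sum to one and the flux coefficients to zero, a constant state `c` is mapped to `c`;
hence `m` and `M` bound the update from below and above.
-/

open Finset

theorem monotoneOn_mul_sub_mul_sub_mul {D : Set ℝ} (hD : Convex ℝ D) {f g f' g' : ℝ → ℝ}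
    {Lf Lg w a b : ℝ} (hf : ∀ x ∈ D, HasDerivAt f (f' x) x) (hg : ∀ x ∈ D, HasDerivAt g (g' x) x)
    (hLf : ∀ x ∈ D, |f' x| ≤ Lf) (hLg : ∀ x ∈ D, |g' x| ≤ Lg) (hw : |a| * Lf + |b| * Lg ≤ w) :
    MonotoneOn (fun x => w * x - a * f x - b * g x) D := by
  have hderiv : ∀ x ∈ D,
      HasDerivAt (fun x => w * x - a * f x - b * g x) (w - a * f' x - b * g' x) x := fun x hx => by
    simpa using (((hasDerivAt_id' x).const_mul w).fun_sub ((hf x hx).const_mul a)).fun_sub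
      ((hg x hx).const_mul b)
  refine monotoneOn_of_hasDerivWithinAt_nonneg hD
    (fun x hx => (hderiv x hx).continuousAt.continuousWithinAt)
    (fun x hx => (hderiv x (interior_subset hx)).hasDerivWithinAt) fun x hx => ?_
  have hx := interior_subset hx
  have hfa : a * f' x ≤ |a| * Lf := calc
    a * f' x ≤ |a * f' x| := le_abs_self _
    _ = |a| * |f' x| := abs_mul a (f' x)
    _ ≤ |a| * Lf := mul_le_mul_of_nonneg_left (hLf x hx) (abs_nonneg a)
  have hgb : b * g' x ≤ |b| * Lg := calc
    b * g' x ≤ |b * g' x| := le_abs_self _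
    _ = |b| * |g' x| := abs_mul b (g' x)
    _ ≤ |b| * Lg := mul_le_mul_of_nonneg_left (hLg x hx) (abs_nonneg b)
  linarith

namespace CompactScheme

noncomputable def simpson : Fin 3 → ℝ := ![1, 4, 1]

noncomputable def centralDiff : Fin 3 → ℝ := ![-1, 0, 1]

theorem simpson_nonneg (k : Fin 3) : 0 ≤ simpson k := by
  fin_cases k <;> norm_num [simpson]

theorem abs_centralDiff_le_simpson (k : Fin 3) : |centralDiff k| ≤ simpson k := by
  fin_cases k <;> norm_num [simpson, centralDiff]

/-- Cell `(k, l)` holds `u_{i+k-1, j+l-1}`; the update is the sum of `cellUpdate … k l` over the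
stencil. -/
noncomputable def cellUpdate (lam1 lam2 : ℝ) (f g : ℝ → ℝ) (k l : Fin 3) (x : ℝ) : ℝ :=
  simpson k * simpson l / 36 * x - lam1 / 12 * (centralDiff k * simpson l) * f x
    - lam2 / 12 * (simpson k * centralDiff l) * g x

theorem sum_cellUpdate_const (lam1 lam2 : ℝ) (f g : ℝ → ℝ) (c : ℝ) :
    ∑ k, ∑ l, cellUpdate lam1 lam2 f g k l c = c := by
  simp [cellUpdate, Fin.sum_univ_three, simpson, centralDiff]
  ring

variable {lam1 lam2 Lf Lg : ℝ}

theorem cellUpdate_coeff_le_of_cfl (hlam1 : 0 ≤ lam1) (hlam2 : 0 ≤ lam2) (hLf : 0 ≤ Lf) (hLg : 0 ≤ Lg)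
    (hcfl : lam1 * Lf + lam2 * Lg ≤ 1 / 3) (k l : Fin 3) :
    |lam1 / 12 * (centralDiff k * simpson l)| * Lf
      + |lam2 / 12 * (simpson k * centralDiff l)| * Lg ≤ simpson k * simpson l / 36 := by
  have hk := simpson_nonneg k
  have hl := simpson_nonneg l
  calc |lam1 / 12 * (centralDiff k * simpson l)| * Lf
        + |lam2 / 12 * (simpson k * centralDiff l)| * Lg
      = lam1 * Lf / 12 * (|centralDiff k| * simpson l)
        + lam2 * Lg / 12 * (simpson k * |centralDiff l|) := by
        rw [abs_mul, abs_mul, abs_mul, abs_mul, abs_of_nonneg (div_nonneg hlam1 (by norm_num)),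
          abs_of_nonneg (div_nonneg hlam2 (by norm_num)), abs_of_nonneg hk, abs_of_nonneg hl]
        ring
    _ ≤ lam1 * Lf / 12 * (simpson k * simpson l) + lam2 * Lg / 12 * (simpson k * simpson l) := by
        have := abs_centralDiff_le_simpson k
        have := abs_centralDiff_le_simpson l
        have := mul_nonneg hlam1 hLf
        have := mul_nonneg hlam2 hLg
        gcongr
    _ = (lam1 * Lf + lam2 * Lg) / 12 * (simpson k * simpson l) := by ring
    _ ≤ 1 / 3 / 12 * (simpson k * simpson l) := by gcongr
    _ = simpson k * simpson l / 36 := by ring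

theorem sum_cellUpdate_mem_Icc {m M : ℝ} {f g : ℝ → ℝ}
    (hmono : ∀ k l, MonotoneOn (cellUpdate lam1 lam2 f g k l) (Set.Icc m M))
    {u : Fin 3 → Fin 3 → ℝ} (hu : ∀ k l, u k l ∈ Set.Icc m M) :
    ∑ k, ∑ l, cellUpdate lam1 lam2 f g k l (u k l) ∈ Set.Icc m M := by
  have hmM : m ≤ M := (hu 0 0).1.trans (hu 0 0).2
  constructor
  · calc m = ∑ k, ∑ l, cellUpdate lam1 lam2 f g k l m := (sum_cellUpdate_const ..).symm
      _ ≤ _ := sum_le_sum fun k _ => sum_le_sum fun l _ =>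
        hmono k l (Set.left_mem_Icc.2 hmM) (hu k l) (hu k l).1
  · calc _ ≤ ∑ k, ∑ l, cellUpdate lam1 lam2 f g k l M :=
          sum_le_sum fun k _ => sum_le_sum fun l _ =>
            hmono k l (hu k l) (Set.right_mem_Icc.2 hmM) (hu k l).2
      _ = M := sum_cellUpdate_const ..

end CompactScheme

theorem stmt_14_general (m M Lf Lg lam1 lam2 : ℝ)
    (u : Fin 3 → Fin 3 → ℝ) (hu : ∀ k l, u k l ∈ Set.Icc m M)
    (f g f' g' : ℝ → ℝ)
    (hf : ∀ x ∈ Set.Icc m M, HasDerivAt f (f' x) x)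
    (hg : ∀ x ∈ Set.Icc m M, HasDerivAt g (g' x) x)
    (hLf : ∀ x ∈ Set.Icc m M, |f' x| ≤ Lf)
    (hLg : ∀ x ∈ Set.Icc m M, |g' x| ≤ Lg)
    (hlam1 : 0 < lam1) (hlam2 : 0 < lam2)
    (hcfl : lam1 * Lf + lam2 * Lg ≤ 1 / 3) :
    (1 / 36) * (u 0 0 + 4 * u 1 0 + u 2 0 + 4 * u 0 1 + 16 * u 1 1 + 4 * u 2 1
        + u 0 2 + 4 * u 1 2 + u 2 2)
      - (lam1 / 12) * (f (u 2 0) - f (u 0 0) + 4 * f (u 2 1) - 4 * f (u 0 1)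
        + f (u 2 2) - f (u 0 2))
      - (lam2 / 12) * (g (u 0 2) - g (u 0 0) + 4 * g (u 1 2) - 4 * g (u 1 0)
        + g (u 2 2) - g (u 2 0)) ∈ Set.Icc m M := by
  open CompactScheme in
  have hLf0 : 0 ≤ Lf := (abs_nonneg _).trans (hLf _ (hu 0 0))
  have hLg0 : 0 ≤ Lg := (abs_nonneg _).trans (hLg _ (hu 0 0))
  have hmono : ∀ k l, MonotoneOn (cellUpdate lam1 lam2 f g k l) (Set.Icc m M) := fun k l =>
    monotoneOn_mul_sub_mul_sub_mul (convex_Icc m M) hf hg hLf hLg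
      (cellUpdate_coeff_le_of_cfl hlam1.le hlam2.le hLf0 hLg0 hcfl k l)
  convert sum_cellUpdate_mem_Icc hmono hu using 1
  simp [cellUpdate, Fin.sum_univ_three, simpson, centralDiff]
  ring

theorem stmt_14 (m M Lf Lg lam1 lam2 : ℝ) (hmM : m ≤ M)
    (u : Fin 3 → Fin 3 → ℝ) (hu : ∀ k l, u k l ∈ Set.Icc m M)
    (f g f' g' : ℝ → ℝ)
    (hf : ∀ x ∈ Set.Icc m M, HasDerivAt f (f' x) x)
    (hg : ∀ x ∈ Set.Icc m M, HasDerivAt g (g' x) x)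
    (hLf : ∀ x ∈ Set.Icc m M, |f' x| ≤ Lf)
    (hLg : ∀ x ∈ Set.Icc m M, |g' x| ≤ Lg)
    (hlam1 : 0 < lam1) (hlam2 : 0 < lam2)
    (hcfl : lam1 * Lf + lam2 * Lg ≤ 1 / 3) :
    (1 / 36) * (u 0 0 + 4 * u 1 0 + u 2 0 + 4 * u 0 1 + 16 * u 1 1 + 4 * u 2 1
        + u 0 2 + 4 * u 1 2 + u 2 2)
      - (lam1 / 12) * (f (u 2 0) - f (u 0 0) + 4 * f (u 2 1) - 4 * f (u 0 1)
        + f (u 2 2) - f (u 0 2))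
      - (lam2 / 12) * (g (u 0 2) - g (u 0 0) + 4 * g (u 1 2) - 4 * g (u 1 0)
        + g (u 2 2) - g (u 2 0)) ∈ Set.Icc m M :=
  stmt_14_general m M Lf Lg lam1 lam2 u hu f g f' g' hf hg hLf hLg hlam1 hlam2 hcfl
end

section
/- Let c ≥ 2, m ∈ ℝ, N ≥ 3, and let u : ℤ/N → ℝ satisfy (u_{i-1} + c·u_i + u_{i+1})/(c+2) ≥ m for all i (indices mod N). For each j define v_j = u_j - (u_j - m)_+·(m - u_{j-1})_+/((u_{j-2} - m)_+ + (u_j - m)_+) - (u_j - m)_+·(m - u_{j+1})_+/((u_j - m)_+ + (u_{j+2} - m)_+) if u_j ≥ m (with the convention 0/0 = 0), and v_j = m if u_j < m. Then v_j ≥ m for all j, and Σ_j v_j = Σ_j u_j. -/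
theorem stmt_19 (N : ℕ) [NeZero N] (hN : 3 ≤ N) (c m : ℝ) (hc : 2 ≤ c)
    (u v : ZMod N → ℝ)
    (h : ∀ i : ZMod N, m ≤ (u (i - 1) + c * u i + u (i + 1)) / (c + 2))
    (hv : ∀ j : ZMod N, v j =
      if u j < m then m
      else u j
        - max (u j - m) 0 * max (m - u (j - 1)) 0
            / (max (u (j - 2) - m) 0 + max (u j - m) 0)
        - max (u j - m) 0 * max (m - u (j + 1)) 0
            / (max (u j - m) 0 + max (u (j + 2) - m) 0)) :
    (∀ j : ZMod N, m ≤ v j) ∧ (∑ j : ZMod N, v j) = ∑ j : ZMod N, u j := by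
  classical
  set e : ZMod N → ℝ := fun i => max (u i - m) 0 with he
  set d : ZMod N → ℝ := fun i => max (m - u i) 0 with hd
  have heq : ∀ i : ZMod N, max (u i - m) 0 = e i := fun i => rfl
  have hdq : ∀ i : ZMod N, max (m - u i) 0 = d i := fun i => rfl
  simp only [heq, hdq] at hv
  have he0 : ∀ i, 0 ≤ e i := fun i => le_max_right _ _
  have hd0 : ∀ i, 0 ≤ d i := fun i => le_max_right _ _
  have heu : ∀ i, u i - m ≤ e i := fun i => le_max_left _ _
  have hc2 : (0:ℝ) < c + 2 := by linarith
  have hm : ∀ i : ZMod N, c * (m - u i) ≤ (u (i-1) - m) + (u (i+1) - m) := by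
    intro i
    have hi := h i
    rw [le_div_iff₀ hc2] at hi
    nlinarith
  have hden : ∀ i : ZMod N, 2 * d i ≤ e (i-1) + e (i+1) := by
    intro i
    rcases le_or_gt (m - u i) 0 with h0 | h0
    · have hdi : d i = 0 := max_eq_right h0
      rw [hdi]
      have := he0 (i-1); have := he0 (i+1); linarith
    · have h1 : d i = m - u i := max_eq_left h0.le
      have h2 : 2 * (m - u i) ≤ c * (m - u i) := by nlinarith
      have h3 := hm i
      have h4 := heu (i-1); have h5 := heu (i+1)
      linarith
  have hden1 : ∀ j : ZMod N, 2 * d (j-1) ≤ e (j-2) + e j := by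
    intro j
    have h1 := hden (j-1)
    have e1 : j - 1 - 1 = j - 2 := by ring
    have e2 : j - 1 + 1 = j := by ring
    rwa [e1, e2] at h1
  have hden2 : ∀ j : ZMod N, 2 * d (j+1) ≤ e j + e (j+2) := by
    intro j
    have h1 := hden (j+1)
    have e1 : j + 1 - 1 = j := by ring
    have e2 : j + 1 + 1 = j + 2 := by ring
    rwa [e1, e2] at h1
  have frac : ∀ a s t : ℝ, 0 ≤ a → 0 ≤ t → 2 * t ≤ s → a * t / s ≤ a / 2 := by
    intro a s t ha ht hts
    rcases eq_or_lt_of_le ht with h0 | h0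
    · rw [← h0]
      simp only [mul_zero, zero_div]
      positivity
    · have hs : 0 < s := lt_of_lt_of_le (by linarith) hts
      rw [div_le_div_iff₀ hs two_pos]
      nlinarith
  have hT1 : ∀ j, e j * d (j-1) / (e (j-2) + e j) ≤ e j / 2 :=
    fun j => frac _ _ _ (he0 j) (hd0 _) (hden1 j)
  have hT2 : ∀ j, e j * d (j+1) / (e j + e (j+2)) ≤ e j / 2 :=
    fun j => frac _ _ _ (he0 j) (hd0 _) (hden2 j)
  constructor
  · intro j
    rw [hv j]
    split_ifs with hj
    · exact le_refl m
    · push_neg at hj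
      have hej : e j = u j - m := max_eq_left (by linarith)
      have t1 := hT1 j
      have t2 := hT2 j
      linarith
  · have hvu : ∀ j : ZMod N, v j = u j + d j
        - e j * d (j-1) / (e (j-2) + e j)
        - e j * d (j+1) / (e j + e (j+2)) := by
      intro j
      rw [hv j]
      split_ifs with hj
      · have hej : e j = 0 := max_eq_right (by linarith)
        have hdj : d j = m - u j := max_eq_left (by linarith)
        rw [hej, hdj]
        simp
      · push_neg at hj
        have hdj : d j = 0 := max_eq_right (by linarith)
        rw [hdj]
        ring
    have hpt : ∀ i : ZMod N,
        e (i+1) * d i / (e (i-1) + e (i+1)) + e (i-1) * d i / (e (i-1) + e (i+1)) = d i := by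
      intro i
      rcases eq_or_lt_of_le (hd0 i) with h0 | h0
      · rw [← h0]; simp
      · have hs : 0 < e (i-1) + e (i+1) := lt_of_lt_of_le (by linarith) (hden i)
        field_simp
        ring
    have sumA : ∑ j : ZMod N, e j * d (j-1) / (e (j-2) + e j)
        = ∑ i : ZMod N, e (i+1) * d i / (e (i-1) + e (i+1)) := by
      apply Fintype.sum_equiv (Equiv.subRight (1 : ZMod N))
      intro j
      show e j * d (j-1) / (e (j-2) + e j)
        = e (j-1+1) * d (j-1) / (e (j-1-1) + e (j-1+1))
      have e1 : j - 1 + 1 = j := by ring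
      have e2 : j - 1 - 1 = j - 2 := by ring
      rw [e1, e2]
    have sumB : ∑ j : ZMod N, e j * d (j+1) / (e j + e (j+2))
        = ∑ i : ZMod N, e (i-1) * d i / (e (i-1) + e (i+1)) := by
      apply Fintype.sum_equiv (Equiv.addRight (1 : ZMod N))
      intro j
      show e j * d (j+1) / (e j + e (j+2))
        = e (j+1-1) * d (j+1) / (e (j+1-1) + e (j+1+1))
      have e1 : j + 1 - 1 = j := by ring
      have e2 : j + 1 + 1 = j + 2 := by ring
      rw [e1, e2]
    have hsum : ∑ i : ZMod N, e (i+1) * d i / (e (i-1) + e (i+1))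
        + ∑ i : ZMod N, e (i-1) * d i / (e (i-1) + e (i+1)) = ∑ i : ZMod N, d i := by
      rw [← Finset.sum_add_distrib]
      exact Finset.sum_congr rfl fun i _ => hpt i
    calc ∑ j : ZMod N, v j
        = ∑ j : ZMod N, (u j + d j
            - e j * d (j-1) / (e (j-2) + e j)
            - e j * d (j+1) / (e j + e (j+2))) :=
          Finset.sum_congr rfl fun j _ => hvu j
      _ = ∑ j : ZMod N, u j := by
          simp only [Finset.sum_sub_distrib, Finset.sum_add_distrib, sumA, sumB]
          linarith [hsum]
end
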